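/- Let $a>0$, $0<c<1$, $0<\beta<1$. Suppose $\gamma_i\neq\gamma_j$ are two distinct roots of the quartic $q(\xi)=a^2(1-c)\xi^4+2(a^2(1-c\beta)+a(1-c(1-\beta)))\xi^3+(1-c(1-\beta)+a^2(1-c\beta)+4a)\xi^2+2(1+a)\xi+1$, neither of which lies in $\{0,-1,-1/a\}$. Then $z(\gamma_i)\neq z(\gamma_j)$, where $z(\xi)=-1/\xi+c(1-\beta)/(1+\xi)+ca\beta/(1+a\xi)$. (The critical values of $z$ at distinct critical points are distinct.) -/

import Mathlib

open Complex

/-- The quartic numerator of `z'(ξ)`, over `ℂ`. -/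
noncomputable def quarticC (a c β : ℝ) (x : ℂ) : ℂ :=
  (a:ℂ)^2*(1-(c:ℂ))*x^4 + 2*((a:ℂ)^2*(1-(c:ℂ)*(β:ℂ)) + (a:ℂ)*(1-(c:ℂ)*(1-(β:ℂ))))*x^3
    + (1-(c:ℂ)*(1-(β:ℂ))+(a:ℂ)^2*(1-(c:ℂ)*(β:ℂ))+4*(a:ℂ))*x^2 + 2*(1+(a:ℂ))*x + 1

/-- The map `z(ξ)`, over `ℂ`. -/
noncomputable def zmapC (a c β : ℝ) (ξ : ℂ) : ℂ :=
  -1/ξ + (c:ℂ)*(1-(β:ℂ))/(1+ξ) + (c:ℂ)*(a:ℂ)*(β:ℂ)/(1+(a:ℂ)*ξ)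

/-!
Write `D(x) = x (1 + x) (1 + a x)` for the common denominator of `z`. For a level `w`, the cubic
`P_w(x) = D(x) (w - z(x))` has constant term `1`, and `D P_w' = D' P_w - q` for every `w`.
Hence a critical point `γ` of `z` is a double root of `P_{z(γ)}`. If two distinct critical points
had the same critical value `w`, the cubic `P_w` would have two distinct double roots, which forces
its constant term to vanish.
-/

theorem eq_of_cubic_double_roots {K : Type*} [CommRing K] [IsDomain K] {p₀ p₁ p₂ p₃ u v : K}
    (hp₀ : p₀ ≠ 0)
    (hu : p₃ * u ^ 3 + p₂ * u ^ 2 + p₁ * u + p₀ = 0) (hu' : 3 * p₃ * u ^ 2 + 2 * p₂ * u + p₁ = 0)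
    (hv : p₃ * v ^ 3 + p₂ * v ^ 2 + p₁ * v + p₀ = 0) (hv' : 3 * p₃ * v ^ 2 + 2 * p₂ * v + p₁ = 0) :
    u = v := by
  have h : (u - v) ^ 3 * p₀ = 0 := by
    linear_combination (v ^ 2 * (3 * u - v)) * hu + (-u * v ^ 2 * (u - v)) * hu'
      + (u ^ 2 * (u - 3 * v)) * hv + (-u ^ 2 * v * (u - v)) * hv'
  simpa [sub_eq_zero, hp₀] using h

section CriticalValues

variable {a c β : ℝ} {w x : ℂ}

noncomputable def denomC (a : ℝ) (x : ℂ) : ℂ := x * (1 + x) * (1 + (a:ℂ) * x)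

noncomputable def levelCubic (a c β : ℝ) (w x : ℂ) : ℂ :=
  w * (a:ℂ) * x ^ 3 + ((1 + (a:ℂ)) * w + (a:ℂ) * (1 - (c:ℂ))) * x ^ 2
    + (w + 1 - (c:ℂ) * (1 - (β:ℂ)) + (a:ℂ) * (1 - (c:ℂ) * (β:ℂ))) * x + 1

noncomputable def levelCubicDeriv (a c β : ℝ) (w x : ℂ) : ℂ :=
  3 * (w * (a:ℂ)) * x ^ 2 + 2 * ((1 + (a:ℂ)) * w + (a:ℂ) * (1 - (c:ℂ))) * x
    + (w + 1 - (c:ℂ) * (1 - (β:ℂ)) + (a:ℂ) * (1 - (c:ℂ) * (β:ℂ)))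

theorem one_add_mul_ne_zero_of_ne_neg_one_div {a x : ℂ} (hx : x ≠ -1 / a) : 1 + a * x ≠ 0 := by
  intro h
  rcases eq_or_ne a 0 with rfl | ha
  · simp at h
  · exact hx (by field_simp; linear_combination h)

theorem denomC_ne_zero (hx₀ : x ≠ 0) (hx₁ : x ≠ -1) (hxa : x ≠ -1 / (a:ℂ)) : denomC a x ≠ 0 :=
  mul_ne_zero (mul_ne_zero hx₀ fun h => hx₁ (by linear_combination h))
    (one_add_mul_ne_zero_of_ne_neg_one_div hxa)

theorem levelCubic_eq_denomC_mul (hD : denomC a x ≠ 0) :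
    levelCubic a c β w x = denomC a x * (w - zmapC a c β x) := by
  obtain ⟨⟨hx₀, hx₁⟩, hxa⟩ : (x ≠ 0 ∧ 1 + x ≠ 0) ∧ 1 + (a:ℂ) * x ≠ 0 := by
    simpa only [denomC, mul_ne_zero_iff] using hD
  unfold levelCubic denomC zmapC
  field_simp
  ring

theorem denomC_mul_levelCubicDeriv :
    denomC a x * levelCubicDeriv a c β w x
      = (3 * (a:ℂ) * x ^ 2 + 2 * (1 + (a:ℂ)) * x + 1) * levelCubic a c β w x - quarticC a c β x := by
  unfold denomC levelCubicDeriv levelCubic quarticC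
  ring

theorem levelCubic_critical (hq : quarticC a c β x = 0) (hD : denomC a x ≠ 0) :
    levelCubic a c β (zmapC a c β x) x = 0 ∧ levelCubicDeriv a c β (zmapC a c β x) x = 0 := by
  have hP : levelCubic a c β (zmapC a c β x) x = 0 := by
    rw [levelCubic_eq_denomC_mul hD, sub_self, mul_zero]
  refine ⟨hP, (mul_eq_zero.mp ?_).resolve_left hD⟩
  rw [denomC_mul_levelCubicDeriv, hP, hq, mul_zero, sub_zero]

end CriticalValues

theorem critical_values_distinct_general
    (a c β : ℝ)
    (γi γj : ℂ) (hne : γi ≠ γj)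
    (hri : quarticC a c β γi = 0) (hrj : quarticC a c β γj = 0)
    (hi0 : γi ≠ 0) (hi1 : γi ≠ -1) (hia : γi ≠ -1/(a:ℂ))
    (hj0 : γj ≠ 0) (hj1 : γj ≠ -1) (hja : γj ≠ -1/(a:ℂ)) :
    zmapC a c β γi ≠ zmapC a c β γj := by
  intro hz
  obtain ⟨hPi, hPi'⟩ := levelCubic_critical hri (denomC_ne_zero hi0 hi1 hia)
  obtain ⟨hPj, hPj'⟩ := levelCubic_critical hrj (denomC_ne_zero hj0 hj1 hja)
  rw [← hz] at hPj hPj'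
  exact hne (eq_of_cubic_double_roots one_ne_zero hPi hPi' hPj hPj')

theorem critical_values_distinct
    (a c β : ℝ) (ha : 0 < a) (hc0 : 0 < c) (hc1 : c < 1)
    (hβ0 : 0 < β) (hβ1 : β < 1)
    (γi γj : ℂ) (hne : γi ≠ γj)
    (hri : quarticC a c β γi = 0) (hrj : quarticC a c β γj = 0)
    (hi0 : γi ≠ 0) (hi1 : γi ≠ -1) (hia : γi ≠ -1/(a:ℂ))
    (hj0 : γj ≠ 0) (hj1 : γj ≠ -1) (hja : γj ≠ -1/(a:ℂ)) :
    zmapC a c β γi ≠ zmapC a c β γj :=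
  critical_values_distinct_general a c β γi γj hne hri hrj hi0 hi1 hia hj0 hj1 hja
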